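/- Every envelope f of the circle family C_{(γ,λ)} has the representation f(t) = γ(t) + λ(t)ν̃(t), where ν̃: I → S¹ is a smooth unit vector field satisfying λ'(t) = -β(t)(ν̃(t)·μ(t)) for all t ∈ I. -/

import Mathlib

noncomputable section

/-- The Euclidean plane. -/
abbrev Plane := EuclideanSpace ℝ (Fin 2)

/-- The standard scalar (dot) product on the plane. -/
def dotp (x y : Plane) : ℝ := inner ℝ x y

/-- The vector with coordinates `a`, `b`. -/
def vec2 (a b : ℝ) : Plane := (WithLp.equiv 2 (Fin 2 → ℝ)).symm ![a, b]

/-- Anti-clockwise rotation by π/2. -/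
def rotJ (v : Plane) : Plane := vec2 (-(v 1)) (v 0)

/-- `f` is an envelope of the circle family with center curve `γ` and radius
function `r`, on the parameter set `I`. -/
def IsEnvelope (I : Set ℝ) (γ : ℝ → Plane) (r : ℝ → ℝ) (f : ℝ → Plane) : Prop :=
  ContDiffOn ℝ (⊤ : ℕ∞) f I ∧
    ∀ t ∈ I, ‖f t - γ t‖ = r t ∧ dotp (deriv f t) (f t - γ t) = 0

lemma dotp_coord (x y : Plane) : dotp x y = x 0 * y 0 + x 1 * y 1 := by
  simp [dotp, PiLp.inner_apply, Fin.sum_univ_two, mul_comm]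

lemma rotJ_coord0 (v : Plane) : rotJ v 0 = -(v 1) := rfl
lemma rotJ_coord1 (v : Plane) : rotJ v 1 = v 0 := rfl

theorem envelope_representation (I : Set ℝ) (hIopen : IsOpen I) (hIconn : I.OrdConnected)
    (γ ν : ℝ → Plane) (r : ℝ → ℝ)
    (hγ : ContDiffOn ℝ (⊤ : ℕ∞) γ I) (hν : ContDiffOn ℝ (⊤ : ℕ∞) ν I)
    (hνunit : ∀ t ∈ I, ‖ν t‖ = 1)
    (hfrontal : ∀ t ∈ I, dotp (deriv γ t) (ν t) = 0)
    (hr : ContDiffOn ℝ (⊤ : ℕ∞) r I) (hrpos : ∀ t ∈ I, 0 < r t)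
    (f : ℝ → Plane) (hf : IsEnvelope I γ r f) :
    ∃ ντ : ℝ → Plane, ContDiffOn ℝ (⊤ : ℕ∞) ντ I ∧ (∀ t ∈ I, ‖ντ t‖ = 1) ∧
      (∀ t ∈ I,
        deriv r t = -(dotp (deriv γ t) (rotJ (ν t))) * dotp (ντ t) (rotJ (ν t))) ∧
      ∀ t ∈ I, f t = γ t + r t • ντ t := by
  obtain ⟨hfs, hfe⟩ := hf
  have hrne : ∀ t ∈ I, r t ≠ 0 := fun t ht => (hrpos t ht).ne'
  set ντ : ℝ → Plane := fun t => (r t)⁻¹ • (f t - γ t) with hντ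
  have hunit : ∀ t ∈ I, ‖ντ t‖ = 1 := by
    intro t ht
    simp only [hντ, norm_smul, (hfe t ht).1, norm_inv, Real.norm_eq_abs,
      abs_of_pos (hrpos t ht)]
    exact inv_mul_cancel₀ (hrne t ht)
  have hrep : ∀ t ∈ I, f t = γ t + r t • ντ t := by
    intro t ht
    simp [hντ, smul_smul, mul_inv_cancel₀ (hrne t ht)]
  refine ⟨ντ, ?_, hunit, ?_, hrep⟩
  · exact (hr.inv hrne).smul (hfs.sub hγ)
  · intro t ht
    have hnt : I ∈ nhds t := hIopen.mem_nhds ht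
    have hft : DifferentiableAt ℝ f t :=
      (hfs.contDiffAt hnt).differentiableAt (by simp)
    have hγt : DifferentiableAt ℝ γ t :=
      (hγ.contDiffAt hnt).differentiableAt (by simp)
    have hrt : DifferentiableAt ℝ r t :=
      (hr.contDiffAt hnt).differentiableAt (by simp)
    have hu : HasDerivAt (fun s => f s - γ s) (deriv f t - deriv γ t) t :=
      hft.hasDerivAt.sub hγt.hasDerivAt
    have hi := hu.inner ℝ hu
    have heq : (fun s => (inner ℝ (f s - γ s) (f s - γ s) : ℝ)) =ᶠ[nhds t]
        fun s => r s * r s := by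
      filter_upwards [hnt] with s hs
      rw [real_inner_self_eq_norm_mul_norm, (hfe s hs).1]
    have hi' := hi.congr_of_eventuallyEq heq.symm
    have hrr : HasDerivAt (fun s => r s * r s)
        (deriv r t * r t + r t * deriv r t) t :=
      hrt.hasDerivAt.mul hrt.hasDerivAt
    have hkey := hi'.unique hrr
    have hcomm : (inner ℝ (deriv f t - deriv γ t) (f t - γ t) : ℝ)
        = inner ℝ (f t - γ t) (deriv f t - deriv γ t) := real_inner_comm _ _
    have hA : (inner ℝ (f t - γ t) (deriv f t - deriv γ t) : ℝ)
        = r t * deriv r t := by linear_combination hkey / 2 - hcomm / 2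
    rw [inner_sub_right] at hA
    have hperp : (inner ℝ (f t - γ t) (deriv f t) : ℝ) = 0 := by
      rw [real_inner_comm]; exact (hfe t ht).2
    have h1 : (inner ℝ (f t - γ t) (deriv γ t) : ℝ) = -(r t * deriv r t) := by
      linear_combination hperp - hA
    have h2 : (inner ℝ (deriv γ t) (ντ t) : ℝ) = - deriv r t := by
      have hu2 : f t - γ t = r t • ντ t := by
        have := hrep t ht; rw [this]; abel
      rw [hu2, real_inner_smul_left, real_inner_comm] at h1
      have := mul_left_cancel₀ (hrne t ht)
        (show r t * (inner ℝ (deriv γ t) (ντ t) : ℝ) = r t * (- deriv r t) by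
          linear_combination h1)
      exact this
    -- coordinate computation
    have hν1 : (ν t 0) ^ 2 + (ν t 1) ^ 2 = 1 := by
      have h := real_inner_self_eq_norm_mul_norm (ν t)
      rw [hνunit t ht, mul_one] at h
      have hc : (inner ℝ (ν t) (ν t) : ℝ) = ν t 0 * ν t 0 + ν t 1 * ν t 1 :=
        dotp_coord (ν t) (ν t)
      linear_combination h - hc
    have hfr : deriv γ t 0 * ν t 0 + deriv γ t 1 * ν t 1 = 0 := by
      have := hfrontal t ht
      rwa [dotp_coord] at this
    have h2' : deriv γ t 0 * ντ t 0 + deriv γ t 1 * ντ t 1 = - deriv r t := by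
      have hc : (inner ℝ (deriv γ t) (ντ t) : ℝ)
          = deriv γ t 0 * ντ t 0 + deriv γ t 1 * ντ t 1 :=
        dotp_coord (deriv γ t) (ντ t)
      rw [hc] at h2; exact h2
    rw [dotp_coord, dotp_coord, rotJ_coord0, rotJ_coord1]
    set a := ν t 0; set b := ν t 1
    set p := deriv γ t 0; set q := deriv γ t 1
    set x := ντ t 0; set y := ντ t 1
    have key : p * x + q * y = (p * (-b) + q * a) * (x * (-b) + y * a) := by
      linear_combination (a * x + b * y) * hfr - (p * x + q * y) * hν1
    linear_combination h2' - key
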